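/- arXiv:1605.01361 — 5 statements merged into one kernel-verified Lean document; each statement's English description precedes it below -/
import Mathlib

section
/- If a trace T is consonant and has unique writes, then for any two distinct routine update events su_i(x)v and su_j(x)v' on the same variable x in T (possibly with i = j), the written values differ: v ≠ v'. -/
open scoped Classical

/-!  A model of transactional-memory traces, following the paper's definitions.
Transactions, variables and values are indexed by naturals; the initial value
of every shared variable is `0`. -/

/-- Events of a transactional memory trace. -/
inductive TMEvent : Type
  | invStart  (i : ℕ)
  | resStart  (i : ℕ)
  | invRead   (i : ℕ) (x : ℕ)
  | resRead   (i : ℕ) (x : ℕ) (v : ℕ)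
  | invWrite  (i : ℕ) (x : ℕ) (v : ℕ)
  | resWrite  (i : ℕ) (x : ℕ) (v : ℕ)   -- `ok_i`
  | invCommit (i : ℕ)
  | resCommit (i : ℕ)                    -- `C_i`
  | invAbort  (i : ℕ)
  | resAbort  (i : ℕ)                    -- `A_i`
  | view      (i : ℕ) (x : ℕ) (v : ℕ)    -- view event `g_i(x)v`
  | rupd      (i : ℕ) (x : ℕ) (v : ℕ)    -- routine update event `su_i(x)v`
  | aupd      (i : ℕ) (x : ℕ) (v : ℕ)    -- recovery update event `sa_i(x)v`
  deriving DecidableEq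

namespace TMEvent

/-- the transaction an event belongs to -/
def tx : TMEvent → ℕ
  | invStart i => i
  | resStart i => i
  | invRead i _ => i
  | resRead i _ _ => i
  | invWrite i _ _ => i
  | resWrite i _ _ => i
  | invCommit i => i
  | resCommit i => i
  | invAbort i => i
  | resAbort i => i
  | view i _ _ => i
  | rupd i _ _ => i
  | aupd i _ _ => i

/-- memory events -/
def isMem : TMEvent → Bool
  | view _ _ _ => true
  | rupd _ _ _ => true
  | aupd _ _ _ => true
  | _ => false

/-- operation events (invocations and responses of the transactional API) -/
def isOp (e : TMEvent) : Prop := e.isMem = false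

/-- update event (routine or recovery) on variable `x` -/
def isUpd (x : ℕ) : TMEvent → Prop
  | rupd _ y _ => y = x
  | aupd _ y _ => y = x
  | _ => False

/-- view event on variable `x` -/
def isViewOn (x : ℕ) : TMEvent → Prop
  | view _ y _ => y = x
  | _ => False

/-- view or routine update event on `x` -/
def isVR (x : ℕ) : TMEvent → Prop
  | view _ y _ => y = x
  | rupd _ y _ => y = x
  | _ => False

/-- any event concerning variable `x` -/
def onVar (x : ℕ) : TMEvent → Prop
  | invRead _ y => y = x
  | resRead _ y _ => y = x
  | invWrite _ y _ => y = x
  | resWrite _ y _ => y = x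
  | view _ y _ => y = x
  | rupd _ y _ => y = x
  | aupd _ y _ => y = x
  | _ => False

end TMEvent

/-- A trace is a finite sequence of events, ordered by position. -/
abbrev TMTrace := List TMEvent

namespace TM
open TMEvent

/-- event `e` occurs at position `p` of trace `T` -/
def EvAt (T : TMTrace) (p : ℕ) (e : TMEvent) : Prop := T[p]? = some e

/-- transaction `T_i` appears in `T` -/
def InTrace (T : TMTrace) (i : ℕ) : Prop := ∃ e ∈ T, e.tx = i

def Committed (T : TMTrace) (i : ℕ) : Prop := TMEvent.resCommit i ∈ T
def Aborted (T : TMTrace) (i : ℕ) : Prop := TMEvent.resAbort i ∈ T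
def Live (T : TMTrace) (i : ℕ) : Prop := ¬ Committed T i ∧ ¬ Aborted T i

/-- no update event on `x` lies strictly between positions `p` and `q` -/
def NoUpdBetween (T : TMTrace) (x p q : ℕ) : Prop :=
  ∀ r e, p < r → r < q → EvAt T r e → ¬ e.isUpd x

/-- the event at `p` precedes the event at `q` with no update event on `x` in between -/
def PrefacesGen (T : TMTrace) (x p q : ℕ) : Prop := p < q ∧ NoUpdBetween T x p q

/-- the update event on `x` at position `p` prefaces the event at position `q` -/
def Prefaces (T : TMTrace) (x p q : ℕ) : Prop :=
  (∃ e, EvAt T p e ∧ e.isUpd x) ∧ PrefacesGen T x p q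

/-- positions `p < q` form a matching invocation/response pair of transaction `T_i`:
no other operation event of `T_i` occurs between them -/
def Matching (T : TMTrace) (i p q : ℕ) : Prop :=
  p < q ∧ ∀ r e, p < r → r < q → EvAt T r e → e.tx = i → ¬ e.isOp

/-- complete read operation execution `r_i(x) → v` at positions `(p, q)` -/
def ReadExec (T : TMTrace) (i x v p q : ℕ) : Prop :=
  EvAt T p (TMEvent.invRead i x) ∧ EvAt T q (TMEvent.resRead i x v) ∧ Matching T i p q

/-- complete write operation execution `w_i(x,v) → ok_i` at positions `(p, q)` -/
def WriteExec (T : TMTrace) (i x v p q : ℕ) : Prop :=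
  EvAt T p (TMEvent.invWrite i x v) ∧ EvAt T q (TMEvent.resWrite i x v) ∧ Matching T i p q

/-- the read of `T_i` on `x` invoked at position `p` is local: it is preceded in
`T|T_i` by a write operation execution on `x` -/
def LocalRead (T : TMTrace) (i x p : ℕ) : Prop :=
  ∃ v pw qw, WriteExec T i x v pw qw ∧ qw < p

/-- the write of `T_i` on `x` whose response is at position `q` is local: it is
followed in `T|T_i` by another write operation execution on `x` -/
def LocalWrite (T : TMTrace) (i x q : ℕ) : Prop :=
  ∃ v pw qw, WriteExec T i x v pw qw ∧ q < pw

/-- `T_i` views `T_j`: some routine update `su_j(x)v` prefaces some view `g_i(x)v` -/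
def Views (T : TMTrace) (i j : ℕ) : Prop :=
  ∃ x v pu pv, EvAt T pu (TMEvent.rupd j x v) ∧ EvAt T pv (TMEvent.view i x v) ∧
    PrefacesGen T x pu pv

/-- `T_i` virtually views `T_j`: some `su_j(x)v` precedes some `g_i(x)v` -/
def VViews (T : TMTrace) (i j : ℕ) : Prop :=
  ∃ x v pu pv, EvAt T pu (TMEvent.rupd j x v) ∧ EvAt T pv (TMEvent.view i x v) ∧ pu < pv

/-- view chain `ζ(T, j, i)`: starts with `T_j`, ends with `T_i`, every transaction
virtually views its predecessor -/
def ViewChain (T : TMTrace) (L : List ℕ) (j i : ℕ) : Prop :=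
  L ≠ [] ∧ L.head? = some j ∧ L.getLast? = some i ∧
  List.Chain' (fun a b => VViews T b a) L

/-- view chain in which each step is a (non-virtual) view -/
def ViewChainStrict (T : TMTrace) (L : List ℕ) (j i : ℕ) : Prop :=
  L ≠ [] ∧ L.head? = some j ∧ L.getLast? = some i ∧
  List.Chain' (fun a b => Views T b a) L

/-- every view or routine update event on `x` of `T_i` precedes in `T` every view or
routine update event on `x` of `T_j` -/
def VarIso (T : TMTrace) (x i j : ℕ) : Prop :=
  ∀ p q ei ej, EvAt T p ei → ei.tx = i → ei.isVR x →
    EvAt T q ej → ej.tx = j → ej.isVR x → p < q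

/-- `T_i` has some view or routine update event on `x` -/
def HasVR (T : TMTrace) (i x : ℕ) : Prop := ∃ p e, EvAt T p e ∧ e.tx = i ∧ e.isVR x

/-- both `T_i` and `T_j` have view or routine update events on `x` -/
def SharedVR (T : TMTrace) (x i j : ℕ) : Prop := HasVR T i x ∧ HasVR T j x

/-- `T_i ≺̇ˣ_T T_j`: both transactions access `x` and `T_i` is isolation-ordered
on `x` before `T_j` -/
def VarIsoOrd (T : TMTrace) (x i j : ℕ) : Prop := SharedVR T x i j ∧ VarIso T x i j

/-- direct isolation order: `T_i ≺̇ˣ_T T_j` for every variable `x` on which both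
transactions have view or routine update events (and there is at least one) -/
def DirIso (T : TMTrace) (i j : ℕ) : Prop :=
  (∃ x, SharedVR T x i j) ∧ ∀ x, SharedVR T x i j → VarIso T x i j

/-- isolation order `≺̇_T`: the transitive closure of the direct isolation order -/
def IsoOrder (T : TMTrace) : ℕ → ℕ → Prop := Relation.TransGen (DirIso T)

/-- `T` is isolated: for any two transactions, one precedes the other on every
variable on which both have view or routine update events, in the same direction -/
def Isolated (T : TMTrace) : Prop :=
  ∀ i j, i ≠ j →
    (∀ x, SharedVR T x i j → VarIso T x i j) ∨ (∀ x, SharedVR T x i j → VarIso T x j i)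

/-- `pu` is the position of the last routine update of `T_j` on `x` -/
def UltimateRupd (T : TMTrace) (j x pu : ℕ) : Prop :=
  ∀ q v, pu < q → ¬ EvAt T q (TMEvent.rupd j x v)

/-- consonance of a view event `g_i(x)v` at position `pv` -/
def ConsonantView (T : TMTrace) (pv i x v : ℕ) : Prop :=
  EvAt T pv (TMEvent.view i x v) ∧
  ((v = 0 ∧ ∀ q e, q < pv → EvAt T q e → ¬ e.isUpd x) ∨
   (v ≠ 0 ∧ ∃ j pu, j ≠ i ∧ EvAt T pu (TMEvent.rupd j x v) ∧ PrefacesGen T x pu pv ∧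
      UltimateRupd T j x pu) ∨
   (∃ j pa, j ≠ i ∧ EvAt T pa (TMEvent.aupd j x v) ∧ PrefacesGen T x pa pv))

/-- consonance of a write: the value is nonzero and within the domain of `x` -/
def ConsonantWriteVal (dom : ℕ → Set ℕ) (x v : ℕ) : Prop := v ≠ 0 ∧ v ∈ dom x

/-- consonance of a routine update `su_i(x)v` at position `pu`: it is instigated by
a consonant write operation execution -/
def ConsonantRupd (dom : ℕ → Set ℕ) (T : TMTrace) (pu i x v : ℕ) : Prop :=
  EvAt T pu (TMEvent.rupd i x v) ∧
  ∃ p q, WriteExec T i x v p q ∧ PrefacesGen T x p pu ∧ ConsonantWriteVal dom x v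

/-- the view event `g_j(x)v` at position `pv` is the first event of `T_j` on `x`
(hence in particular non-local) -/
def InitViewOn (T : TMTrace) (j x pv v : ℕ) : Prop :=
  EvAt T pv (TMEvent.view j x v) ∧
  ∀ q e, q < pv → EvAt T q e → e.tx = j → ¬ e.onVar x

/-- consonance of a recovery update `sa_i(x)v` at position `pa`: conservative,
clean, needed, dooming and ending -/
def ConsonantAupd (T : TMTrace) (pa i x v : ℕ) : Prop :=
  EvAt T pa (TMEvent.aupd i x v) ∧
  -- conservative (with the justifying view) and clean
  (∃ pv, ConsonantView T pv i x v ∧ InitViewOn T i x pv v ∧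
    ∀ j pa' v', j ≠ i → VarIsoOrd T x j i → EvAt T pa' (TMEvent.aupd j x v') →
      ¬ (pv < pa' ∧ pa' < pa)) ∧
  -- needed
  (∃ pu v', EvAt T pu (TMEvent.rupd i x v') ∧ pu < pa) ∧
  -- dooming
  (∀ q, pa < q → ¬ EvAt T q (TMEvent.resCommit i)) ∧
  -- ending
  (∀ q e, pa < q → EvAt T q e → e.tx = i → ¬ (e.isUpd x ∨ e.isViewOn x))

/-- the view of `T_i` on `x` at position `pv` is non-local: not preceded by a write
operation execution of `T_i` on `x` -/
def NonLocalViewAt (T : TMTrace) (i x pv : ℕ) : Prop :=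
  ∀ v pw qw, WriteExec T i x v pw qw → ¬ qw < pv

/-- consonance of a non-local read execution: it depends on a consonant non-local
view event -/
def ConsonantNonLocalRead (T : TMTrace) (i x v p q : ℕ) : Prop :=
  ∃ pv, EvAt T pv (TMEvent.view i x v) ∧ PrefacesGen T x pv q ∧
    ConsonantView T pv i x v ∧ NonLocalViewAt T i x pv

/-- consonance of a local read `r_i(x) → v` invoked at `p`: some consonant write
`w_i(x,v) → ok_i` prefaces it in `T|T_i` -/
def ConsonantLocalRead (dom : ℕ → Set ℕ) (T : TMTrace) (i x v p q : ℕ) : Prop :=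
  ∃ pw qw, WriteExec T i x v pw qw ∧ qw < p ∧ ConsonantWriteVal dom x v ∧
    ∀ u pw' qw', WriteExec T i x u pw' qw' → ¬ (qw < qw' ∧ qw' < p)

/-- trace consonance: all operation executions, update events and view events are
consonant -/
def Consonant (dom : ℕ → Set ℕ) (T : TMTrace) : Prop :=
  (∀ p i x v, EvAt T p (TMEvent.view i x v) → ConsonantView T p i x v) ∧
  (∀ p i x v, EvAt T p (TMEvent.rupd i x v) → ConsonantRupd dom T p i x v) ∧
  (∀ p i x v, EvAt T p (TMEvent.aupd i x v) → ConsonantAupd T p i x v) ∧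
  (∀ i x v p q, WriteExec T i x v p q → ConsonantWriteVal dom x v) ∧
  (∀ i x v p q, ReadExec T i x v p q → LocalRead T i x p →
     ConsonantLocalRead dom T i x v p q) ∧
  (∀ i x v p q, ReadExec T i x v p q → ¬ LocalRead T i x p →
     ConsonantNonLocalRead T i x v p q)

/-- `T'` contains no invocation of a write of `T_i` on `x` after position `p` -/
def NoLaterWriteInv (T' : TMTrace) (i x p : ℕ) : Prop :=
  ∀ q v, p < q → ¬ EvAt T' q (TMEvent.invWrite i x v)

/-- the write execution of `T_i` on `x` at `(p, q)` is the closing write on `x`: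
in no possible extension of `T` (a trace of `Prog` of which `T` is a prefix) does
`T_i` invoke a further write on `x` -/
def ClosingWrite (Prog : Set TMTrace) (T : TMTrace) (i x v p q : ℕ) : Prop :=
  WriteExec T i x v p q ∧ NoLaterWriteInv T i x p ∧
  ∀ T' ∈ Prog, T <+: T' → NoLaterWriteInv T' i x p

/-- `T_i` is decided on `x`: `T|T_i` contains its completed closing write on `x` -/
def Decided (Prog : Set TMTrace) (T : TMTrace) (i x : ℕ) : Prop :=
  ∃ v p q, ClosingWrite Prog T i x v p q

/-- committed write obbligato for a write `w_i(x,v)` invoked at `p` -/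
def CommittedWriteObbligato (T : TMTrace) (i x v p : ℕ) : Prop :=
  ∃ pu pc, EvAt T pu (TMEvent.rupd i x v) ∧ PrefacesGen T x p pu ∧
    EvAt T pc (TMEvent.resCommit i) ∧ pu < pc

/-- closing write obbligato for a closing write `w_i(x,v)` invoked at `p` -/
def ClosingWriteObbligato (T : TMTrace) (i x v p : ℕ) : Prop :=
  ∀ j pv v', j ≠ i → IsoOrder T i j → EvAt T pv (TMEvent.view j x v') →
    ∃ pu, EvAt T pu (TMEvent.rupd i x v) ∧ PrefacesGen T x p pu ∧ pu < pv

/-- view write obbligato for a write of `T_i` on `x` -/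
def ViewWriteObbligato (T : TMTrace) (i x : ℕ) : Prop :=
  ∀ j pv v', j ≠ i → IsoOrder T i j → EvAt T pv (TMEvent.view j x v') →
    (∃ pu e, EvAt T pu e ∧ e.tx = i ∧ e.isUpd x ∧ pu < pv) ∨
    (∃ pa, EvAt T pa (TMEvent.resAbort i) ∧ pa < pv)

/-- trace obbligato -/
def Obbligato (Prog : Set TMTrace) (T : TMTrace) : Prop :=
  (∀ i x v p q, WriteExec T i x v p q → ¬ LocalWrite T i x q → Committed T i →
     CommittedWriteObbligato T i x v p) ∧
  (∀ i x v p q, ClosingWrite Prog T i x v p q → ClosingWriteObbligato T i x v p) ∧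
  (∀ i x v p q, WriteExec T i x v p q → ViewWriteObbligato T i x)

/-- commit accord -/
def CommitAccord (T : TMTrace) : Prop :=
  ∀ i j, Views T j i → Committed T j → Committed T i

/-- abort accord -/
def AbortAccord (T : TMTrace) : Prop :=
  (∀ i j, Views T j i → Aborted T i → Live T j ∨ Aborted T j) ∧
  (∀ i j x pu v pe e pa v',
     EvAt T pu (TMEvent.rupd i x v) → EvAt T pe e → e.tx = j → e.isVR x →
     EvAt T pa (TMEvent.aupd i x v') → pu < pe → pe < pa →
     Live T j ∨ Aborted T j)

/-- coherence -/
def Coherent (T : TMTrace) : Prop :=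
  ∀ i j x, i ≠ j → VarIsoOrd T x i j → ∀ pc, EvAt T pc (TMEvent.resCommit j) →
    ∃ pr, pr < pc ∧ (EvAt T pr (TMEvent.resCommit i) ∨ EvAt T pr (TMEvent.resAbort i))

/-- abort coda -/
def AbortCoda (T : TMTrace) : Prop :=
  (∀ i x v pu pr, EvAt T pu (TMEvent.rupd i x v) → EvAt T pr (TMEvent.resAbort i) →
     ∃ j pa v', (j = i ∨ VarIsoOrd T x i j) ∧ EvAt T pa (TMEvent.aupd j x v') ∧
       pu < pa ∧ pa < pr) ∧
  (∀ i pr, EvAt T pr (TMEvent.resCommit i) →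
     ∀ x pe e, EvAt T pe e → e.tx = i → e.isVR x →
       ∀ j pa v', EvAt T pa (TMEvent.aupd j x v') → ¬ (pe < pa ∧ pa < pr))

/-- chain isolation of a sequence of transactions `L` -/
def ChainIsolated (T : TMTrace) (L : List ℕ) : Prop :=
  ∀ k ∈ L, ∀ x v pu, EvAt T pu (TMEvent.rupd k x v) →
    ∀ l pa, EvAt T pa (TMEvent.aupd l x v) →
      ∀ m ∈ L, ∀ pe e, EvAt T pe e → e.tx = m →
        ¬ ((pu < pa ∧ pa < pe) ∨ (pe < pa ∧ pa < pu))

/-- `m` occurs in the sequence `L` strictly after `k` and strictly before `l` -/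
def SeqBetween (L : List ℕ) (k m l : ℕ) : Prop :=
  ∃ a b c : ℕ, a < b ∧ b < c ∧ L[a]? = some k ∧ L[b]? = some m ∧ L[c]? = some l

/-- chain self-containment of a sequence of transactions `L` -/
def ChainSelfContained (T : TMTrace) (L : List ℕ) : Prop :=
  ∀ k ∈ L, ∀ l ∈ L, k ≠ l → ∀ x v v' pu pv,
    EvAt T pu (TMEvent.rupd k x v) → EvAt T pv (TMEvent.view l x v') → pu < pv →
    (v = v' ∨ ∃ m pm, SeqBetween L k m l ∧ EvAt T pm (TMEvent.rupd m x v') ∧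
        pu < pm ∧ pm < pv)

/-- chain consistency: every view chain is chain-isolated and self-contained -/
def ChainConsistent (T : TMTrace) : Prop :=
  ∀ L j i, ViewChain T L j i → ChainIsolated T L ∧ ChainSelfContained T L

/-- minimalism: for each variable, each transaction contains at most one view
event, at most one routine update event and at most one recovery update event -/
def Minimalistic (T : TMTrace) : Prop :=
  ∀ i x,
    (∀ p q v v', EvAt T p (TMEvent.view i x v) → EvAt T q (TMEvent.view i x v') → p = q) ∧
    (∀ p q v v', EvAt T p (TMEvent.rupd i x v) → EvAt T q (TMEvent.rupd i x v') → p = q) ∧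
    (∀ p q v v', EvAt T p (TMEvent.aupd i x v) → EvAt T q (TMEvent.aupd i x v') → p = q)

/-- unique writes: distinct write executions on the same variable write distinct
values, and no written value equals the initial value `0` -/
def UniqueWrites (T : TMTrace) : Prop :=
  (∀ i x v p q, WriteExec T i x v p q → v ≠ 0) ∧
  (∀ i j x v v' p q p' q', WriteExec T i x v p q → WriteExec T j x v' p' q' →
     (p ≠ p' ∨ q ≠ q') → v ≠ v')

/-- decisiveness -/
def Decisive (Prog : Set TMTrace) (T : TMTrace) : Prop :=
  ∀ i j x v pu pv, EvAt T pu (TMEvent.rupd j x v) → EvAt T pv (TMEvent.view i x v) →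
    PrefacesGen T x pu pv →
    Decided Prog T j x ∨ ∃ pc, EvAt T pc (TMEvent.resCommit j) ∧ pu < pc ∧ pc < pv

/-- trace harmony -/
def Harmonious (Prog : Set TMTrace) (dom : ℕ → Set ℕ) (T : TMTrace) : Prop :=
  Minimalistic T ∧ Consonant dom T ∧ Obbligato Prog T ∧ Coherent T ∧
  CommitAccord T ∧ AbortAccord T ∧ AbortCoda T ∧ Isolated T ∧
  Decisive Prog T ∧ ChainConsistent T ∧ UniqueWrites T

/-- `Hist(T)`: the subsequence of operation events of `T` -/
def Hist (T : TMTrace) : TMTrace := T.filter (fun e => !e.isMem)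

/-- `C` is a completion of the history `H` that aborts every live or
commit-pending transaction -/
def IsCompletion (H C : TMTrace) : Prop :=
  H <+: C ∧
  (∀ i, InTrace C i → Committed C i ∨ Aborted C i) ∧
  (∀ p e, H.length ≤ p → EvAt C p e →
    ∃ i, e = TMEvent.invAbort i ∨ e = TMEvent.resAbort i)

/-- some event of `T_i` precedes some event of `T_j` in `S` -/
def TxPrec (S : TMTrace) (i j : ℕ) : Prop :=
  ∃ p q e f, p < q ∧ EvAt S p e ∧ e.tx = i ∧ EvAt S q f ∧ f.tx = j

/-- `S` is a sequential history: transactions do not interleave -/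
def Sequential (S : TMTrace) : Prop :=
  ∀ i j, i ≠ j → ¬ (TxPrec S i j ∧ TxPrec S j i)

/-- `S` is equivalent to `C`: both restrict to the same sequence for every
transaction -/
def EquivH (S C : TMTrace) : Prop :=
  ∀ i : ℕ, S.filter (fun e => e.tx == i) = C.filter (fun e => e.tx == i)

/-- `T_i` real-time-precedes `T_j` in `T`: every event of `T_i` precedes every
event of `T_j` (both appear in `T`) -/
def RTPre (T : TMTrace) (i j : ℕ) : Prop :=
  InTrace T i ∧ InTrace T j ∧
  ∀ p q e f, EvAt T p e → e.tx = i → EvAt T q f → f.tx = j → p < q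

/-- `T_j` contains a non-local write execution on `x` -/
def HasNonLocalWrite (T : TMTrace) (j x : ℕ) : Prop :=
  ∃ v p q, WriteExec T j x v p q ∧ ¬ LocalWrite T j x q

/-- `S` is the sequential history generated from `Hist(T)`: it is a sequential
history equivalent to a completion of `Hist(T)` in which `T_i` precedes `T_j`
whenever (1) `T_i` real-time-precedes `T_j`, or else (2) `T_i ≺̇_T T_j`, or else
(3) `T_j` contains a non-local write on some `x` and `T_i` contains a view or
routine update event on `x` -/
def SeqGen (T S : TMTrace) : Prop :=
  (∃ C, IsCompletion (Hist T) C ∧ EquivH S C) ∧ Sequential S ∧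
  ∀ i j, i ≠ j →
    (RTPre T i j → TxPrec S i j) ∧
    (¬ RTPre T i j → ¬ RTPre T j i → IsoOrder T i j → TxPrec S i j) ∧
    (¬ RTPre T i j → ¬ RTPre T j i → ¬ IsoOrder T i j → ¬ IsoOrder T j i →
      (∃ x, HasNonLocalWrite T j x ∧ HasVR T i x) → TxPrec S i j)

/-- `Vis(S, T_i)`: the longest subhistory of `S` containing `S|T_j` in whole
exactly when `j = i`, or `T_j` is committed in `S` and precedes `T_i` in `S` -/
noncomputable def Vis (S : TMTrace) (i : ℕ) : TMTrace :=
  S.filter (fun e => decide (e.tx = i ∨ (Committed S e.tx ∧ TxPrec S e.tx i)))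

/-- `S|T_j` is included in whole in `Vis(S, T_i)` -/
def VisIncl (S : TMTrace) (i j : ℕ) : Prop :=
  j = i ∨ (Committed S j ∧ TxPrec S j i)

/-- the decided transaction subhistory completion of `T_j` (w.r.t. a decidedness
predicate `Dec`): its start, its operations on every variable on which it is
decided, followed by `tryC_j → C_j` -/
noncomputable def DecidedPart (Dec : ℕ → ℕ → Prop) (S : TMTrace) (j : ℕ) : TMTrace :=
  (S.filter (fun e => decide (e.tx = j ∧
      (e = TMEvent.invStart j ∨ e = TMEvent.resStart j ∨ ∃ x, e.onVar x ∧ Dec j x))))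
    ++ [TMEvent.invCommit j, TMEvent.resCommit j]

/-- the transactions of `S`, in the order of their first events -/
def txList (S : TMTrace) : List ℕ := (S.map TMEvent.tx).dedup

/-- `T_j` is included (in whole or as its decided transaction subhistory
completion) in `LUVis(S, T_i)` according to the construction -/
def LUIncl (Prog : Set TMTrace) (T : TMTrace) (S : TMTrace) (i j : ℕ) : Prop :=
  j = i ∨ Committed T j ∨
    (¬ (Aborted T j ∧ RTPre T j i) ∧ ∃ L, ViewChain T L j i)

/-- `LUVis(Ŝ, T_i)`, constructed per transaction: include `Ŝ|T_j` in whole if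
`T_j` is committed in `T`; exclude `T_j` if it is aborted in `T` and real-time
precedes `T_i`; otherwise include its decided transaction subhistory completion
if a view chain `ζ(T, j, i)` exists; otherwise exclude it -/
noncomputable def LUVis (Prog : Set TMTrace) (T S : TMTrace) (i : ℕ) : TMTrace :=
  (txList S).flatMap (fun j =>
    if j = i then S.filter (fun e => e.tx == j)
    else if Committed T j then S.filter (fun e => e.tx == j)
    else if Aborted T j ∧ RTPre T j i then []
    else if ∃ L, ViewChain T L j i then DecidedPart (Decided Prog T) S j
    else [])

/-- the history-level `LUVis(S, T_i)` used in the definition of last-use opacity: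
`S|T_j` is included in whole if `j = i` or `T_j` is committed in `S` and precedes
`T_i` in `S`; the decided transaction subhistory completion of `T_j` is included
iff `T_j` is not committed in `S` but is decided on some variable, precedes `T_i`
in `S`, and does not real-time-precede `T_i` in the history `H` -/
noncomputable def LUVisH (ProgH : Set TMTrace) (H S : TMTrace) (i : ℕ) : TMTrace :=
  (txList S).flatMap (fun j =>
    if j = i ∨ (Committed S j ∧ TxPrec S j i) then S.filter (fun e => e.tx == j)
    else if ¬ Committed S j ∧ (∃ x, Decided ProgH H j x) ∧ TxPrec S j i ∧ ¬ RTPre H j i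
      then DecidedPart (Decided ProgH H) S j
    else [])

/-- a sequential history is legal if every read on `x` returns the value of the
latest preceding (completed) write on `x`, or the initial value `0` if none -/
def Legal (S : TMTrace) : Prop :=
  ∀ p i x v, EvAt S p (TMEvent.resRead i x v) →
    ((v = 0 ∧ ∀ q j u, q < p → ¬ EvAt S q (TMEvent.resWrite j x u)) ∨
     (∃ q j, q < p ∧ EvAt S q (TMEvent.resWrite j x v) ∧
        ∀ r k u, q < r → r < p → ¬ EvAt S r (TMEvent.resWrite k x u)))

/-- final-state last-use opacity of a finite history `H` (with `ProgH` the set of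
possible extensions of histories, used to determine decided transactions) -/
def FinalStateLUOpaque (ProgH : Set TMTrace) (H : TMTrace) : Prop :=
  ∃ C S, IsCompletion H C ∧ Sequential S ∧ EquivH S C ∧
    (∀ i j, i ≠ j → RTPre H i j → TxPrec S i j) ∧
    (∀ i, InTrace S i → Committed S i → Legal (Vis S i)) ∧
    (∀ i, InTrace S i → ¬ Committed S i → Legal (LUVisH ProgH H S i))

/-- last-use opacity: every finite prefix is final-state last-use opaque -/
def LUOpaque (ProgH : Set TMTrace) (H : TMTrace) : Prop :=
  ∀ H', H' <+: H → FinalStateLUOpaque ProgH H'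

/-- one step of the `abset` sequence: the initial non-local view event on `x` of
`T_b` is prefaced in `T` by a recovery update on `x` of `T_a` -/
def AbStep (T : TMTrace) (x a b : ℕ) : Prop :=
  ∃ v pv, InitViewOn T b x pv v ∧
    ∃ v' pa, EvAt T pa (TMEvent.aupd a x v') ∧ PrefacesGen T x pa pv

/-- `L` is a candidate `abset(T, T_i, x)` sequence: it ends with `T_i` and every
member other than the first has its initial non-local view event on `x` prefaced
by a recovery update on `x` of the immediately preceding member -/
def IsAbsetSeq (T : TMTrace) (i x : ℕ) (L : List ℕ) : Prop :=
  L ≠ [] ∧ L.getLast? = some i ∧ List.Chain' (AbStep T x) L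

/-- `L = abset(T, T_i, x)`: the longest such sequence; it is defined only when
the first event of `T_i` on `x` is a non-local view event -/
def IsAbset (T : TMTrace) (i x : ℕ) (L : List ℕ) : Prop :=
  (∃ pv v, InitViewOn T i x pv v) ∧ IsAbsetSeq T i x L ∧
  ∀ L', IsAbsetSeq T i x L' → L'.length ≤ L.length

end TM

namespace TM

/-!
**Statement 4 (Unique Routine Updates).**
If a trace `T` is consonant and has unique writes, then any two distinct
routine update events `su_i(x)v` and `su_j(x)v'` on the same variable `x`
(occurring at distinct positions `p ≠ p'`, possibly with `i = j`) have
different written values: `v ≠ v'`.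
-/
theorem unique_routine_updates
    (dom : ℕ → Set ℕ) (T : TMTrace)
    (hcons : Consonant dom T) (huniq : UniqueWrites T)
    (i j x v v' p p' : ℕ)
    (hp : EvAt T p (TMEvent.rupd i x v))
    (hp' : EvAt T p' (TMEvent.rupd j x v'))
    (hne : p ≠ p') :
    v ≠ v' := by
  intro hv
  subst hv
  obtain ⟨_, hrc, _, hwuniq, _⟩ := hcons
  obtain ⟨_, pw, qw, hwe, hpref, _⟩ := hrc p i x v hp
  obtain ⟨_, pw', qw', hwe', hpref', _⟩ := hrc p' j x v hp'
  by_cases hsame : pw = pw' ∧ qw = qw'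
  · obtain ⟨h1, h2⟩ := hsame
    subst h1; subst h2
    -- both updates prefaced by the same write invocation at pw
    rcases Nat.lt_or_ge p p' with hlt | hge
    · exact hpref'.2 p (TMEvent.rupd i x v) hpref.1 hlt hp rfl
    · have hlt' : p' < p := lt_of_le_of_ne hge (Ne.symm hne)
      exact hpref.2 p' (TMEvent.rupd j x v) hpref'.1 hlt' hp' rfl
  · have : pw ≠ pw' ∨ qw ≠ qw' := by tauto
    exact huniq.2 i j x v v pw qw pw' qw' hwe hwe' this rfl

end TM
end

section
/- Let T be a consonant trace and T_i a transaction in T for which abset(T,T_i,x) is defined. If T_j is the first element of abset(T,T_i,x), then T|T_j contains a non-local view event e_v = g_j(x)v that is the first event on x in T|T_j, and either (a) v = 0 and no update event on x by any transaction precedes e_v in T, or (b) v ≠ 0 and some routine update event su_k(x)v of some transaction T_k prefaces e_v in T. -/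
open scoped Classical

namespace TM

/-!
**Statement 6 (First element of `abset` views).**
Let `T` be a consonant trace and `T_i` a transaction for which
`abset(T, T_i, x)` is defined (witnessed by `L`).  If `T_j` is the first
element of `abset(T, T_i, x)`, then `T|T_j` contains a non-local view event
`e_v = g_j(x)v` that is the first event on `x` in `T|T_j`, and either
(a) `v = 0` and no update event on `x` by any transaction precedes `e_v` in
`T`, or (b) `v ≠ 0` and some routine update event `su_k(x)v` of some
transaction `T_k` prefaces `e_v` in `T`.
-/
theorem abset_first_views
    (dom : ℕ → Set ℕ) (T : TMTrace) (hcons : Consonant dom T)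
    (i x : ℕ) (L : List ℕ) (hab : IsAbset T i x L)
    (j : ℕ) (hj : L.head? = some j) :
    ∃ pv v, InitViewOn T j x pv v ∧
      ((v = 0 ∧ ∀ q e, q < pv → EvAt T q e → ¬ e.isUpd x) ∨
       (v ≠ 0 ∧ ∃ k pu, EvAt T pu (TMEvent.rupd k x v) ∧ PrefacesGen T x pu pv)) := by
  obtain ⟨hdef, ⟨hne, hlast, hchain⟩, hmax⟩ := hab
  -- L = j :: tl
  obtain ⟨tl, rfl⟩ : ∃ tl, L = j :: tl := by
    cases L with
    | nil => simp at hj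
    | cons a tl =>
        simp only [List.head?_cons, Option.some.injEq] at hj
        exact ⟨tl, by rw [hj]⟩
  -- obtain an initial non-local view event of T_j on x
  have hinit : ∃ pv v, InitViewOn T j x pv v := by
    cases tl with
    | nil =>
        have : j = i := by simpa using hlast
        subst this
        exact hdef
    | cons b rest =>
        have hstep : AbStep T x j b := (List.isChain_cons_cons.mp hchain).1
        obtain ⟨v, pv, _, v', pa, hpa, _⟩ := hstep
        have hca := hcons.2.2.1 pa j x v' hpa
        obtain ⟨_, ⟨pv', hcv, hiv, _⟩, _⟩ := hca
        exact ⟨pv', v', hiv⟩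
  obtain ⟨pv, v, hiv⟩ := hinit
  have hcv : ConsonantView T pv j x v := hcons.1 pv j x v hiv.1
  rcases hcv.2 with h0 | ⟨hv, k, pu, _, hpu, hpref, _⟩ | ⟨k, pa, hk, hpa, hpref⟩
  · exact ⟨pv, v, hiv, Or.inl h0⟩
  · exact ⟨pv, v, hiv, Or.inr ⟨hv, k, pu, hpu, hpref⟩⟩
  · -- the view is prefaced by a recovery update of T_k: extend L, contradiction
    exfalso
    have hseq : IsAbsetSeq T i x (k :: j :: tl) := by
      refine ⟨by simp, ?_, ?_⟩
      · simpa [List.getLast?_cons_cons] using hlast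
      · exact List.isChain_cons_cons.mpr ⟨⟨v, pv, hiv, v, pa, hpa, hpref⟩, hchain⟩
    have := hmax _ hseq
    simp at this

end TM
end

section
/- Let T be a consonant trace and T_i a transaction for which abset(T,T_i,x) is defined. Then for any two transactions T_j, T_k in abset(T,T_i,x), if T_j precedes T_k in the sequence abset(T,T_i,x), then T_j ≺̇ˣ_T T_k; in particular, every T_j in abset(T,T_i,x) with j ≠ i satisfies T_j ≺̇ˣ_T T_i. -/
open scoped Classical

namespace TM

/-!
**Statement 9 (`abset` order).**
Let `T` be a consonant trace and `T_i` a transaction for which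
`abset(T, T_i, x)` is defined (witnessed by `L`).  Then for any two
transactions `T_j`, `T_k` in `abset(T, T_i, x)`, if `T_j` precedes `T_k` in the
sequence then `T_j ≺̇ˣ_T T_k`; in particular, every `T_j` in the sequence with
`j ≠ i` satisfies `T_j ≺̇ˣ_T T_i`.
-/

lemma isVR_onVar' {x : ℕ} {e : TMEvent} (h : e.isVR x) : e.onVar x := by
  cases e <;> simp_all [TMEvent.isVR, TMEvent.onVar]

lemma isVR_upd_or_view' {x : ℕ} {e : TMEvent} (h : e.isVR x) :
    e.isUpd x ∨ e.isViewOn x := by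
  cases e <;> simp_all [TMEvent.isVR, TMEvent.isUpd, TMEvent.isViewOn]

lemma abstep_varIsoOrd (dom : ℕ → Set ℕ) (T : TMTrace) (hcons : Consonant dom T)
    (x a b : ℕ) (h : AbStep T x a b) : VarIsoOrd T x a b := by
  obtain ⟨v, pv, hinit, v', pa, hev, hpg⟩ := h
  obtain ⟨_, _, ⟨pu, v'', hpu, hpupa⟩, _, hend⟩ := hcons.2.2.1 pa a x v' hev
  constructor
  · constructor
    · exact ⟨pu, TMEvent.rupd a x v'', hpu, rfl, by simp [TMEvent.isVR]⟩
    · exact ⟨pv, TMEvent.view b x v, hinit.1, rfl, by simp [TMEvent.isVR]⟩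
  · intro p q ea eb hp htxa hvra hq htxb hvrb
    have hqpv : pv ≤ q := by
      by_contra h'
      push_neg at h'
      exact hinit.2 q eb h' hq htxb (isVR_onVar' hvrb)
    have hppv : p < pv := by
      by_contra h'
      push_neg at h'
      exact hend p ea (lt_of_lt_of_le hpg.1 h') hp htxa (isVR_upd_or_view' hvra)
    exact lt_of_lt_of_le hppv hqpv

lemma varIsoOrd_trans' {T : TMTrace} {x a b c : ℕ}
    (h1 : VarIsoOrd T x a b) (h2 : VarIsoOrd T x b c) : VarIsoOrd T x a c := by
  obtain ⟨⟨ha, hb⟩, hab⟩ := h1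
  obtain ⟨⟨_, hc⟩, hbc⟩ := h2
  refine ⟨⟨ha, hc⟩, ?_⟩
  intro p q ea ec hp htxa hvra hq htxc hvrc
  obtain ⟨r, eb, hr, htxb, hvrb⟩ := hb
  exact lt_trans (hab p r ea eb hp htxa hvra hr htxb hvrb)
    (hbc r q eb ec hr htxb hvrb hq htxc hvrc)

theorem abset_order
    (dom : ℕ → Set ℕ) (T : TMTrace) (hcons : Consonant dom T)
    (i x : ℕ) (L : List ℕ) (hab : IsAbset T i x L) :
    (∀ a b j k : ℕ, a < b → L[a]? = some j → L[b]? = some k → VarIsoOrd T x j k) ∧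
    (∀ j ∈ L, j ≠ i → VarIsoOrd T x j i) := by
  obtain ⟨-, ⟨hne, hlast, hchain⟩, -⟩ := hab
  have hchain' : List.Chain' (VarIsoOrd T x) L :=
    List.IsChain.imp (fun {a b} h => abstep_varIsoOrd dom T hcons x a b h) hchain
  have hpw : List.Pairwise (VarIsoOrd T x) L := by
    haveI : IsTrans ℕ (VarIsoOrd T x) := ⟨fun a b c => varIsoOrd_trans'⟩
    exact List.isChain_iff_pairwise.mp hchain'
  have hpart1 : ∀ a b j k : ℕ, a < b → L[a]? = some j → L[b]? = some k →
      VarIsoOrd T x j k := by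
    intro a b j k hlt hja hkb
    obtain ⟨hb, hkb'⟩ := List.getElem?_eq_some_iff.mp hkb
    obtain ⟨ha, hja'⟩ := List.getElem?_eq_some_iff.mp hja
    have := List.pairwise_iff_getElem.mp hpw a b ha hb hlt
    rwa [hja', hkb'] at this
  refine ⟨hpart1, ?_⟩
  intro j hj hji
  obtain ⟨a, ha, hja⟩ := List.mem_iff_getElem.mp hj
  have hlen : 0 < L.length := List.length_pos_iff.mpr hne
  have hiLast : L[L.length - 1]? = some i := by
    rwa [List.getLast?_eq_getElem?] at hlast
  have halt : a < L.length - 1 := by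
    rcases lt_or_eq_of_le (Nat.le_sub_one_of_lt ha) with h | h
    · exact h
    · exfalso
      apply hji
      have : L[a]? = some i := by rw [h]; exact hiLast
      rw [List.getElem?_eq_getElem ha, hja] at this
      exact Option.some_injective _ this
  exact hpart1 a (L.length - 1) j i halt
    (by rw [List.getElem?_eq_getElem ha, hja]) hiLast

end TM
end

section
/- Let T be a harmonious trace, Ŝ the sequential history generated from Hist(T), and T_i a transaction committed in T. For every local read execution op_i = r_i(x)→v in T|T_i, there is a write execution op_i' = w_i(x,v)→ok_i of the same transaction T_i in Vis(Ŝ,T_i) such that op_i' precedes op_i in Vis(Ŝ,T_i) with no other write execution on x between them. -/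
open scoped Classical

namespace TM
/-! ### Auxiliary infrastructure: index correspondence for `List.filter` -/

section IdxMap

variable {α : Type*}

/-- the position in `l.filter p` corresponding to position `q` of `l` -/
def idxMap (l : List α) (p : α → Bool) (q : ℕ) : ℕ := (l.take q).countP p

lemma idxMap_mono (l : List α) (p : α → Bool) {q q' : ℕ} (h : q ≤ q') :
    idxMap l p q ≤ idxMap l p q' :=
  List.Sublist.countP_le (p := p) (List.take_sublist_take_left (l := l) h)

lemma idxMap_succ {l : List α} {p : α → Bool} {q : ℕ} {e : α}
    (he : l[q]? = some e) (hp : p e = true) :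
    idxMap l p (q + 1) = idxMap l p q + 1 := by
  unfold idxMap
  rw [List.take_succ, he, List.countP_append]
  simp [List.countP_cons, hp]

lemma idxMap_lt {l : List α} {p : α → Bool} {q q' : ℕ} {e : α}
    (h : q < q') (he : l[q]? = some e) (hp : p e = true) :
    idxMap l p q < idxMap l p q' :=
  lt_of_lt_of_le (by rw [idxMap_succ he hp]; omega) (idxMap_mono l p h)

lemma lt_of_idxMap_lt {l : List α} {p : α → Bool} {q q' : ℕ}
    (h : idxMap l p q < idxMap l p q') : q < q' := by
  by_contra hc
  exact absurd (idxMap_mono l p (not_lt.mp hc)) (by omega)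

lemma filter_getElem?_idxMap {l : List α} {p : α → Bool} {q : ℕ} {e : α}
    (he : l[q]? = some e) (hp : p e = true) :
    (l.filter p)[idxMap l p q]? = some e := by
  induction l generalizing q with
  | nil => simp at he
  | cons a t ih =>
    cases q with
    | zero =>
      simp only [List.getElem?_cons_zero, Option.some.injEq] at he
      subst he
      simp [idxMap, List.filter_cons, hp]
    | succ q =>
      simp only [List.getElem?_cons_succ] at he
      have : idxMap (a :: t) p (q + 1) =
          idxMap t p q + (if p a = true then 1 else 0) := by
        simp [idxMap, List.take_succ_cons, List.countP_cons]
      rw [this]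
      by_cases hpa : p a = true
      · simp [List.filter_cons, hpa, ih he]
      · simp [List.filter_cons, hpa, ih he]

lemma exists_of_filter_getElem? {l : List α} {p : α → Bool} {k : ℕ} {e : α}
    (h : (l.filter p)[k]? = some e) :
    ∃ q, l[q]? = some e ∧ p e = true ∧ idxMap l p q = k := by
  induction l generalizing k with
  | nil => simp at h
  | cons a t ih =>
    by_cases hpa : p a = true
    · rw [List.filter_cons_of_pos hpa] at h
      cases k with
      | zero =>
        simp only [List.getElem?_cons_zero, Option.some.injEq] at h
        exact ⟨0, by simp [← h, hpa, idxMap]⟩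
      | succ k =>
        simp only [List.getElem?_cons_succ] at h
        obtain ⟨q, h1, h2, h3⟩ := ih h
        refine ⟨q + 1, by simpa using h1, h2, ?_⟩
        simp only [idxMap, List.take_succ_cons, List.countP_cons, hpa, if_pos]
        simpa [idxMap] using h3
    · rw [List.filter_cons_of_neg hpa] at h
      obtain ⟨q, h1, h2, h3⟩ := ih h
      refine ⟨q + 1, by simpa using h1, h2, ?_⟩
      simp only [idxMap, List.take_succ_cons, List.countP_cons, hpa]
      simpa [idxMap] using h3

end IdxMap

/-- events at the same position of a trace are equal -/
lemma evat_fun {T : TMTrace} {p : ℕ} {e f : TMEvent}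
    (h1 : EvAt T p e) (h2 : EvAt T p f) : e = f := by
  rw [EvAt] at h1 h2
  rw [h1] at h2
  exact Option.some.inj h2

/-- **Chain lemma.** In a consonant trace, the value seen by a consonant view
event is either the initial value `0`, or stems from a routine update event on
the same variable at an earlier position; moreover if the routine update belongs
to the viewing transaction itself, then some other transaction has a view or
routine update event on the same variable strictly in between. -/
lemma view_source {dom : ℕ → Set ℕ} {T : TMTrace} (hcons : Consonant dom T) (x : ℕ) :
    ∀ Q m w, ConsonantView T Q m x w →
      w = 0 ∨ ∃ k pu, EvAt T pu (TMEvent.rupd k x w) ∧ pu < Q ∧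
        (k = m → ∃ j1 q1 e, j1 ≠ m ∧ EvAt T q1 e ∧ e.tx = j1 ∧ e.isVR x ∧
          pu < q1 ∧ q1 < Q) := by
  intro Q
  induction Q using Nat.strong_induction_on with
  | _ Q IH =>
    intro m w hcv
    obtain ⟨hview, hcase⟩ := hcv
    rcases hcase with ⟨h0, _⟩ | ⟨hne, j, pu, hji, hru, hpref, _⟩ | ⟨j, pa, hjm, hau, hpref⟩
    · exact Or.inl h0
    · refine Or.inr ⟨j, pu, hru, hpref.1, fun hk => absurd hk hji⟩
    · -- recovery-update case: recurse through the conservative view of `T_j`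
      have hpaQ : pa < Q := hpref.1
      obtain ⟨_, ⟨pv, hcv', hinit, _⟩, _, _, _⟩ := hcons.2.2.1 pa j x w hau
      have hpv_pa : pv < pa := by
        rcases lt_trichotomy pv pa with h | h | h
        · exact h
        · exfalso
          subst h
          exact absurd (evat_fun hau hinit.1) (by simp)
        · exact absurd hau (by
            intro hau'
            exact hinit.2 pa _ h hau' rfl rfl)
      rcases IH pv (by omega) j w hcv' with h0 | ⟨k, pu, hru, hpu, hside⟩
      · exact Or.inl h0
      · refine Or.inr ⟨k, pu, hru, by omega, fun hk => ?_⟩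
        exact ⟨j, pv, TMEvent.view j x w, hjm, hinit.1, rfl, rfl, hpu, by omega⟩

/-- selection predicate for operation events of `T_i` -/
def pTsel (i : ℕ) : TMEvent → Bool := fun e => (e.tx == i) && !e.isMem

/-- selection predicate for events of `T_i` -/
def pVsel (i : ℕ) : TMEvent → Bool := fun e => e.tx == i



/-!
**Statement 16 (Local Read Consistency).**
Let `T` be a harmonious trace, `S = Ŝ` the sequential history generated from
`Hist(T)`, and `T_i` a transaction committed in `T`.  For every local read
execution `op_i = r_i(x) → v` in `T|T_i` (which occurs in `Vis(Ŝ, T_i)` at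
positions `(c, d)`), there is a write execution `op_i' = w_i(x,v) → ok_i` of
the same transaction `T_i` in `Vis(Ŝ, T_i)` such that `op_i'` precedes `op_i`
in `Vis(Ŝ, T_i)` with no other write execution on `x` between them.
-/
theorem local_read_consistency
    (Prog : Set TMTrace) (dom : ℕ → Set ℕ) (T S : TMTrace)
    (hharm : Harmonious Prog dom T) (hgen : SeqGen T S)
    (i : ℕ) (hcom : Committed T i)
    (x v pi qi : ℕ) (hread : ReadExec T i x v pi qi) (hloc : LocalRead T i x pi) :
    ∀ c d, ReadExec (Vis S i) i x v c d →
      ∃ a b, WriteExec (Vis S i) i x v a b ∧ b < c ∧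
        ∀ k u e f, WriteExec (Vis S i) k x u e f → ¬ (b < f ∧ f < d) := by
  intro c d hcd
  obtain ⟨hmin, hcons, hob, hcoh, hcacc, haacc, hcoda, hiso, hdec, hcc, huw⟩ := hharm
  obtain ⟨⟨C, ⟨hpre, hcomp, habs⟩, hequiv⟩, hseq, -⟩ := hgen
  obtain ⟨R, hR⟩ := hpre
  -- `Vis S i` restricted to `T_i` equals `W ++ A`, where `W` is the sequence of
  -- operation events of `T_i` in `T` and `A` consists of abort events only
  have hVA : (Vis S i).filter (pVsel i) = T.filter (pTsel i) ++ R.filter (pVsel i) := by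
    have h1 : (Vis S i).filter (pVsel i) = S.filter (pVsel i) := by
      simp only [Vis]
      rw [List.filter_filter]
      refine List.filter_congr fun e _ => ?_
      by_cases h : e.tx = i
      · simp [pVsel, h]
      · simp [pVsel, h]
    have h2 : C.filter (pVsel i) = T.filter (pTsel i) ++ R.filter (pVsel i) := by
      rw [← hR, List.filter_append]
      congr 1
      show ((T.filter fun e => !e.isMem).filter (pVsel i)) = _
      rw [List.filter_filter]
      exact List.filter_congr fun e _ => by simp [pVsel, pTsel]
    have h3 : S.filter (pVsel i) = C.filter (pVsel i) := hequiv i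
    rw [h1, h3, h2]
  -- transfer lemmas between positions of `Vis S i`, `W ++ A`, `W` and `T`
  have hgetV : ∀ {q : ℕ} {e : TMEvent}, EvAt (Vis S i) q e → e.tx = i →
      (T.filter (pTsel i) ++ R.filter (pVsel i))[idxMap (Vis S i) (pVsel i) q]? = some e := by
    intro q e hq htx
    rw [← hVA]
    exact filter_getElem?_idxMap hq (by simp [pVsel, htx])
  have hbackV : ∀ {k : ℕ} {e : TMEvent}, (T.filter (pTsel i) ++ R.filter (pVsel i))[k]? = some e →
      ∃ q, EvAt (Vis S i) q e ∧ e.tx = i ∧ idxMap (Vis S i) (pVsel i) q = k := by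
    intro k e hk
    rw [← hVA] at hk
    obtain ⟨q, h1, h2, h3⟩ := exists_of_filter_getElem? hk
    exact ⟨q, h1, by simpa [pVsel] using h2, h3⟩
  have hgetT : ∀ {q : ℕ} {e : TMEvent}, EvAt T q e → e.tx = i → e.isMem = false →
      (T.filter (pTsel i))[idxMap T (pTsel i) q]? = some e := by
    intro q e hq h1 h2
    exact filter_getElem?_idxMap hq (by simp [pTsel, h1, h2])
  have hbackT : ∀ {k : ℕ} {e : TMEvent}, (T.filter (pTsel i))[k]? = some e →
      ∃ q, EvAt T q e ∧ idxMap T (pTsel i) q = k ∧ e.tx = i ∧ e.isMem = false := by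
    intro k e hk
    obtain ⟨q, h1, h2, h3⟩ := exists_of_filter_getElem? hk
    simp only [pTsel, Bool.and_eq_true, beq_iff_eq, Bool.not_eq_true'] at h2
    exact ⟨q, h1, h3, h2.1, h2.2⟩
  have hWofA : ∀ {k : ℕ} {e : TMEvent}, (T.filter (pTsel i) ++ R.filter (pVsel i))[k]? = some e →
      (∀ j, e ≠ TMEvent.invAbort j ∧ e ≠ TMEvent.resAbort j) →
      k < (T.filter (pTsel i)).length ∧ (T.filter (pTsel i))[k]? = some e := by
    intro k e hk hne
    by_cases hlt : k < (T.filter (pTsel i)).length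
    · rw [List.getElem?_append, if_pos hlt] at hk
      exact ⟨hlt, hk⟩
    · exfalso
      rw [List.getElem?_append, if_neg hlt] at hk
      have heA : e ∈ R.filter (pVsel i) := List.mem_iff_getElem?.mpr ⟨_, hk⟩
      have heR : e ∈ R := (List.mem_filter.mp heA).1
      obtain ⟨n, hn⟩ := List.mem_iff_getElem?.mp heR
      have hC : C[(Hist T).length + n]? = some e := by
        rw [← hR, List.getElem?_append_right (by omega)]
        simpa using hn
      obtain ⟨j, hj⟩ := habs _ e (by omega) hC
      rcases hj with hj | hj
      · exact (hne j).1 hj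
      · exact (hne j).2 hj
  have hWtoVA : ∀ {k : ℕ} {e : TMEvent}, (T.filter (pTsel i))[k]? = some e →
      (T.filter (pTsel i) ++ R.filter (pVsel i))[k]? = some e := by
    intro k e hk
    have : k < (T.filter (pTsel i)).length := (List.getElem?_eq_some_iff.mp hk).1
    rw [List.getElem?_append, if_pos this]
    exact hk
  -- matching events of `T_i` occupy consecutive positions of `W ++ A`
  have hconsecVi : ∀ (p q : ℕ) (e f : TMEvent), EvAt (Vis S i) p e → EvAt (Vis S i) q f →
      e.tx = i → f.tx = i → p < q →
      (∀ r g, p < r → r < q → EvAt (Vis S i) r g → g.tx = i → ¬ g.isOp) →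
      idxMap (Vis S i) (pVsel i) q < (T.filter (pTsel i)).length →
      idxMap (Vis S i) (pVsel i) q = idxMap (Vis S i) (pVsel i) p + 1 := by
    intro p q e f hp hq he hf hpq hmid hqW
    have h1 : idxMap (Vis S i) (pVsel i) p < idxMap (Vis S i) (pVsel i) q :=
      idxMap_lt hpq hp (by simp [pVsel, he])
    by_contra hne
    have hmW : idxMap (Vis S i) (pVsel i) p + 1 < (T.filter (pTsel i)).length := by omega
    have hmlen : idxMap (Vis S i) (pVsel i) p + 1 <
        (T.filter (pTsel i) ++ R.filter (pVsel i)).length := by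
      rw [List.length_append]; omega
    have hgetm := List.getElem?_eq_getElem hmlen
    obtain ⟨r, hrV, hrtx, hridx⟩ := hbackV hgetm
    have hpr : p < r := lt_of_idxMap_lt (l := Vis S i) (p := pVsel i) (by omega)
    have hrq : r < q := lt_of_idxMap_lt (l := Vis S i) (p := pVsel i) (by omega)
    have hWm : (T.filter (pTsel i))[idxMap (Vis S i) (pVsel i) p + 1]? =
        some ((T.filter (pTsel i) ++ R.filter (pVsel i))[idxMap (Vis S i) (pVsel i) p + 1]) := by
      rw [← hgetm, List.getElem?_append, if_pos hmW]
    have hmem := List.mem_iff_getElem?.mpr ⟨_, hWm⟩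
    have hpt := (List.mem_filter.mp hmem).2
    simp only [pTsel, Bool.and_eq_true, beq_iff_eq, Bool.not_eq_true'] at hpt
    exact hmid r _ hpr hrq hrV hrtx hpt.2
  -- matching operation events of `T_i` in `T` occupy consecutive positions of `W`
  have hconsecW : ∀ (p q : ℕ) (e f : TMEvent), EvAt T p e → EvAt T q f →
      e.tx = i → e.isMem = false → f.tx = i → f.isMem = false → Matching T i p q →
      idxMap T (pTsel i) q = idxMap T (pTsel i) p + 1 := by
    intro p q e f hp hq he1 he2 hf1 hf2 hm
    have h1 : idxMap T (pTsel i) p < idxMap T (pTsel i) q :=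
      idxMap_lt hm.1 hp (by simp [pTsel, he1, he2])
    by_contra hne
    have hqlen : idxMap T (pTsel i) q < (T.filter (pTsel i)).length :=
      (List.getElem?_eq_some_iff.mp (hgetT hq hf1 hf2)).1
    have hmlen : idxMap T (pTsel i) p + 1 < (T.filter (pTsel i)).length := by omega
    have hgetm := List.getElem?_eq_getElem hmlen
    obtain ⟨r, hrT, hridx, hrtx, hrmem⟩ := hbackT hgetm
    have hpr : p < r := lt_of_idxMap_lt (l := T) (p := pTsel i) (by omega)
    have hrq : r < q := lt_of_idxMap_lt (l := T) (p := pTsel i) (by omega)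
    exact hm.2 r _ hpr hrq hrT hrtx hrmem
  -- consecutive positions of `W` yield a matching pair in `T`
  have hmatchT : ∀ (k : ℕ) (e f : TMEvent), (T.filter (pTsel i))[k]? = some e →
      (T.filter (pTsel i))[k + 1]? = some f →
      ∃ p q, EvAt T p e ∧ EvAt T q f ∧ idxMap T (pTsel i) p = k ∧
        idxMap T (pTsel i) q = k + 1 ∧ Matching T i p q := by
    intro k e f hk hk1
    obtain ⟨p, hpT, hip, hetx, hemem⟩ := hbackT hk
    obtain ⟨q, hqT, hiq, hftx, hfmem⟩ := hbackT hk1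
    have hpq : p < q := lt_of_idxMap_lt (l := T) (p := pTsel i) (by omega)
    refine ⟨p, q, hpT, hqT, hip, hiq, hpq, ?_⟩
    intro r g hpr hrq hrT htx hop
    have h1 : k < idxMap T (pTsel i) r := by
      have := idxMap_lt (l := T) (p := pTsel i) hpr hpT (by simp [pTsel, hetx, hemem])
      omega
    have h2 : idxMap T (pTsel i) r < k + 1 := by
      have := idxMap_lt (l := T) (p := pTsel i) hrq hrT (by simp [pTsel, htx]; exact hop)
      omega
    omega
  -- an event sitting between two events of `T_i` in `Vis S i` belongs to `T_i`
  have hmidtx : ∀ (p q r : ℕ) (e g f : TMEvent), p < q → q < r →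
      EvAt (Vis S i) p e → EvAt (Vis S i) q g → EvAt (Vis S i) r f →
      e.tx = i → f.tx = i → g.tx = i := by
    intro p q r e g f hpq hqr hp hq hr he hf
    by_contra hg
    have hp' := hp; have hq' := hq; have hr' := hr
    simp only [EvAt, Vis] at hp' hq' hr'
    obtain ⟨sp, hsp, -, hip⟩ := exists_of_filter_getElem? hp'
    obtain ⟨sq, hsq, -, hiq⟩ := exists_of_filter_getElem? hq'
    obtain ⟨sr, hsr, -, hir⟩ := exists_of_filter_getElem? hr'
    have h1 : sp < sq := lt_of_idxMap_lt (by rw [hip, hiq]; exact hpq)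
    have h2 : sq < sr := lt_of_idxMap_lt (by rw [hiq, hir]; exact hqr)
    exact hseq i g.tx (fun hh => hg hh.symm)
      ⟨⟨sp, sq, e, g, h1, hsp, he, hsq, rfl⟩, ⟨sq, sr, g, f, h2, hsq, rfl, hsr, hf⟩⟩
  -- locate the given read in `W` and in `T`
  obtain ⟨hcV, hdV, hmV⟩ := hcd
  have hkc : (T.filter (pTsel i) ++ R.filter (pVsel i))[idxMap (Vis S i) (pVsel i) c]? =
      some (TMEvent.invRead i x) := hgetV hcV rfl
  have hkd : (T.filter (pTsel i) ++ R.filter (pVsel i))[idxMap (Vis S i) (pVsel i) d]? =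
      some (TMEvent.resRead i x v) := hgetV hdV rfl
  have hdW := hWofA hkd (by intro j; exact ⟨by simp, by simp⟩)
  have hsucc : idxMap (Vis S i) (pVsel i) d = idxMap (Vis S i) (pVsel i) c + 1 :=
    hconsecVi c d _ _ hcV hdV rfl rfl hmV.1 hmV.2 hdW.1
  have hcW := hWofA hkc (by intro j; exact ⟨by simp, by simp⟩)
  obtain ⟨pH, qH, hpH, hqH, hipH, hiqH, hmTpq⟩ := hmatchT _ _ _ hcW.2 (hsucc ▸ hdW.2)
  have hTread : ReadExec T i x v pH qH := ⟨hpH, hqH, hmTpq⟩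
  by_cases hl : LocalRead T i x pH
  · -- the read is local in `T`: use its consonant write
    obtain ⟨pw, qw, hwT, hqwp, hcwv, hnob⟩ := hcons.2.2.2.2.1 i x v pH qH hTread hl
    have hWwp : (T.filter (pTsel i))[idxMap T (pTsel i) pw]? =
        some (TMEvent.invWrite i x v) := hgetT hwT.1 rfl rfl
    have hWwq : (T.filter (pTsel i))[idxMap T (pTsel i) qw]? =
        some (TMEvent.resWrite i x v) := hgetT hwT.2.1 rfl rfl
    have hwH : idxMap T (pTsel i) qw = idxMap T (pTsel i) pw + 1 :=
      hconsecW pw qw _ _ hwT.1 hwT.2.1 rfl rfl rfl rfl hwT.2.2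
    have hwHqcH : idxMap T (pTsel i) qw < idxMap (Vis S i) (pVsel i) c := by
      have := idxMap_lt (l := T) (p := pTsel i) hqwp hwT.2.1 (by simp [pTsel, TMEvent.tx, TMEvent.isMem])
      omega
    obtain ⟨a, haV, -, hta⟩ := hbackV (hWtoVA hWwp)
    obtain ⟨b, hbV, -, htb⟩ := hbackV (hWtoVA hWwq)
    have hab : a < b := lt_of_idxMap_lt (l := Vis S i) (p := pVsel i) (by omega)
    have hbc : b < c := lt_of_idxMap_lt (l := Vis S i) (p := pVsel i) (by omega)
    refine ⟨a, b, ⟨haV, hbV, hab, ?_⟩, hbc, ?_⟩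
    · intro r g har hrb hrV htx _
      have h1 : idxMap (Vis S i) (pVsel i) a < idxMap (Vis S i) (pVsel i) r :=
        idxMap_lt har haV (by simp [pVsel, TMEvent.tx])
      have h2 : idxMap (Vis S i) (pVsel i) r < idxMap (Vis S i) (pVsel i) b :=
        idxMap_lt hrb hrV (by simp [pVsel, htx])
      omega
    · rintro k u e f ⟨heV, hfV, hmW⟩ ⟨hbf, hfd⟩
      have hk : i = k := (hmidtx b f d _ _ _ hbf hfd hbV hfV hdV rfl rfl).symm
      subst hk
      have hkf : (T.filter (pTsel i) ++ R.filter (pVsel i))[idxMap (Vis S i) (pVsel i) f]? =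
          some (TMEvent.resWrite i x u) := hgetV hfV rfl
      have hfdH : idxMap (Vis S i) (pVsel i) f < idxMap (Vis S i) (pVsel i) d :=
        idxMap_lt hfd hfV (by simp [pVsel, TMEvent.tx])
      have hfne : idxMap (Vis S i) (pVsel i) f ≠ idxMap (Vis S i) (pVsel i) c := by
        intro h
        have := hkc.symm.trans (h ▸ hkf)
        simp at this
      have hcHW : idxMap (Vis S i) (pVsel i) c < (T.filter (pTsel i)).length := by omega
      have hfW : idxMap (Vis S i) (pVsel i) f < (T.filter (pTsel i)).length := by omega
      have hsucc2 : idxMap (Vis S i) (pVsel i) f = idxMap (Vis S i) (pVsel i) e + 1 :=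
        hconsecVi e f _ _ heV hfV rfl rfl hmW.1 hmW.2 hfW
      have hWe := hWofA (hgetV heV rfl) (by intro j; exact ⟨by simp, by simp⟩)
      have hWf : (T.filter (pTsel i))[idxMap (Vis S i) (pVsel i) e + 1]? =
          some (TMEvent.resWrite i x u) := by
        rw [← hsucc2]
        exact (hWofA hkf (by intro j; exact ⟨by simp, by simp⟩)).2
      obtain ⟨p'', q'', hp'', hq'', hip'', hiq'', hm''⟩ := hmatchT _ _ _ hWe.2 hWf
      have hW2 : WriteExec T i x u p'' q'' := ⟨hp'', hq'', hm''⟩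
      have n1 : idxMap (Vis S i) (pVsel i) b < idxMap (Vis S i) (pVsel i) f :=
        idxMap_lt hbf hbV (by simp [pVsel, TMEvent.tx])
      have h1 : qw < q'' := lt_of_idxMap_lt (show idxMap T (pTsel i) qw < idxMap T (pTsel i) q'' by omega)
      have h2 : q'' < pH := lt_of_idxMap_lt (show idxMap T (pTsel i) q'' < idxMap T (pTsel i) pH by omega)
      exact hnob u p'' q'' hW2 ⟨h1, h2⟩
  · -- the read cannot be non-local in `T`
    exfalso
    obtain ⟨pv, hview, hprefv, hcv, hnlv⟩ := hcons.2.2.2.2.2 i x v pH qH hTread hl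
    obtain ⟨pw, qw, hwT, hqwpi, hcwv, -⟩ := hcons.2.2.2.2.1 i x v pi qi hread hloc
    rcases view_source hcons x pv i v hcv with h0 | ⟨k, pu, hru, hpuv, hside⟩
    · exact hcwv.1 h0
    obtain ⟨-, p', q', hw', -, -⟩ := hcons.2.1 pu k x v hru
    have hk : i = k := by
      rw [eq_comm]
      by_contra hki
      have hpp : p' ≠ pw := by
        intro h
        subst h
        have := evat_fun hw'.1 hwT.1
        simp only [TMEvent.invWrite.injEq] at this
        exact hki this.1
      exact (huw.2 k i x v v p' q' pw qw hw' hwT (Or.inl hpp)) rfl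
    subst hk
    obtain ⟨j1, q1, ev, hj1, hq1, htx1, hvr1, hpuq1, hq1pv⟩ := hside rfl
    have hsh : SharedVR T x i j1 :=
      ⟨⟨pv, _, hview, rfl, rfl⟩, ⟨q1, ev, hq1, htx1, hvr1⟩⟩
    rcases hiso i j1 (fun h => hj1 h.symm) with h | h
    · exact absurd (h x hsh pv q1 _ ev hview rfl rfl hq1 htx1 hvr1) (by omega)
    · exact absurd (h x hsh q1 pu ev _ hq1 htx1 hvr1 hru rfl rfl) (by omega)

end TM
end

section
/- Let T be a harmonious trace, Ŝ the sequential history generated from Hist(T), and T_i any transaction in T. For every local read execution op_i = r_i(x)→v in T|T_i, there is a write execution op_i' = w_i(x,v)→ok_i of the same transaction T_i in LUVis(Ŝ,T_i) such that op_i' precedes op_i in LUVis(Ŝ,T_i) with no other write execution on x between them. -/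
open scoped Classical

namespace TM

/-!
**Statement 19 (Local Read Last-use Consistency).**
Let `T` be a harmonious trace, `S = Ŝ` the sequential history generated from
`Hist(T)`, and `T_i` any transaction in `T`.  For every local read execution
`op_i = r_i(x) → v` in `T|T_i` (which occurs in `LUVis(Ŝ, T_i)` at positions
`(c, d)`), there is a write execution `op_i' = w_i(x,v) → ok_i` of the same
transaction `T_i` in `LUVis(Ŝ, T_i)` such that `op_i'` precedes `op_i` in
`LUVis(Ŝ, T_i)` with no other write execution on `x` between them.
-/

private lemma evAt_unique {l : TMTrace} {p : ℕ} {e f : TMEvent}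
    (he : EvAt l p e) (hf : EvAt l p f) : e = f := by
  unfold EvAt at he hf; rw [he] at hf; exact Option.some.inj hf

/-- position in `l` of the `k`-th element satisfying `p` -/
private def rIdx (p : TMEvent → Bool) : List TMEvent → ℕ → ℕ
  | [], _ => 0
  | a :: l, k =>
    match p a, k with
    | true, 0 => 0
    | true, (k+1) => rIdx p l k + 1
    | false, k => rIdx p l k + 1

private lemma rIdx_get (p : TMEvent → Bool) :
    ∀ (l : List TMEvent) (k : ℕ) (e : TMEvent),
      (l.filter p)[k]? = some e → l[rIdx p l k]? = some e := by
  intro l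
  induction l with
  | nil => intro k e h; simp at h
  | cons a l IH =>
    intro k e h
    cases hp : p a with
    | true =>
      rw [List.filter_cons, if_pos hp] at h
      cases k with
      | zero =>
        simp only [List.getElem?_cons_zero, Option.some.injEq] at h
        subst h
        simp [rIdx, hp]
      | succ k =>
        rw [List.getElem?_cons_succ] at h
        simpa [rIdx, hp] using IH k e h
    | false =>
      rw [List.filter_cons, if_neg (by simp [hp])] at h
      simpa [rIdx, hp] using IH k e h

private lemma rIdx_mono (p : TMEvent → Bool) :
    ∀ (l : List TMEvent) (k₁ k₂ : ℕ) (e : TMEvent), k₁ < k₂ →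
      (l.filter p)[k₂]? = some e → rIdx p l k₁ < rIdx p l k₂ := by
  intro l
  induction l with
  | nil => intro k₁ k₂ e _ h; simp at h
  | cons a l IH =>
    intro k₁ k₂ e hk h
    cases hp : p a with
    | true =>
      rw [List.filter_cons, if_pos hp] at h
      obtain ⟨k₂', rfl⟩ : ∃ k₂', k₂ = k₂' + 1 := ⟨k₂ - 1, by omega⟩
      rw [List.getElem?_cons_succ] at h
      cases k₁ with
      | zero => simp [rIdx, hp]
      | succ k₁ =>
        have := IH k₁ k₂' e (by omega) h
        simp only [rIdx, hp]
        omega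
    | false =>
      rw [List.filter_cons, if_neg (by simp [hp])] at h
      have := IH k₁ k₂ e hk h
      simp only [rIdx, hp]
      omega

private lemma rIdx_le_mono (p : TMEvent → Bool) (l : List TMEvent) (k₁ k₂ : ℕ) (e : TMEvent)
    (hk : k₁ ≤ k₂) (h : (l.filter p)[k₂]? = some e) : rIdx p l k₁ ≤ rIdx p l k₂ := by
  rcases Nat.eq_or_lt_of_le hk with rfl | hlt
  · exact le_rfl
  · exact le_of_lt (rIdx_mono p l k₁ k₂ e hlt h)

private lemma rIdx_surj (p : TMEvent → Bool) :
    ∀ (l : List TMEvent) (r : ℕ) (e : TMEvent), l[r]? = some e → p e = true →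
      ∃ k, (l.filter p)[k]? = some e ∧ rIdx p l k = r := by
  intro l
  induction l with
  | nil => intro r e h; simp at h
  | cons a l IH =>
    intro r e h hpe
    cases r with
    | zero =>
      simp only [List.getElem?_cons_zero, Option.some.injEq] at h
      subst h
      refine ⟨0, ?_, ?_⟩
      · rw [List.filter_cons, if_pos hpe]; simp
      · simp [rIdx, hpe]
    | succ r =>
      rw [List.getElem?_cons_succ] at h
      obtain ⟨k, hk1, hk2⟩ := IH r e h hpe
      cases hp : p a with
      | true =>
        refine ⟨k + 1, ?_, ?_⟩
        · rw [List.filter_cons, if_pos hp, List.getElem?_cons_succ]; exact hk1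
        · simp [rIdx, hp, hk2]
      | false =>
        refine ⟨k, ?_, ?_⟩
        · rw [List.filter_cons, if_neg (by simp [hp])]; exact hk1
        · simp [rIdx, hp, hk2]

private lemma rIdx_gap (p : TMEvent → Bool) (l : List TMEvent) (k r : ℕ) (e₁ e₂ e : TMEvent)
    (h₁ : (l.filter p)[k]? = some e₁) (h₂ : (l.filter p)[k+1]? = some e₂)
    (hr₁ : rIdx p l k < r) (hr₂ : r < rIdx p l (k+1)) (he : l[r]? = some e) :
    p e = false := by
  by_contra h
  have hpe : p e = true := by
    cases hpe : p e
    · exact absurd hpe h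
    · rfl
  obtain ⟨k', hk'1, hk'2⟩ := rIdx_surj p l r e he hpe
  have h3 : k < k' := by
    by_contra h3
    have := rIdx_le_mono p l k' k e₁ (by omega) h₁
    omega
  have h4 : k' < k + 1 := by
    by_contra h4
    have := rIdx_le_mono p l (k+1) k' e (by omega) hk'1
    omega
  omega

private def gOp (i : ℕ) : TMEvent → Bool := fun e => (e.tx == i) && !e.isMem

private lemma gOp_true_iff {i : ℕ} {e : TMEvent} :
    gOp i e = true ↔ e.tx = i ∧ e.isMem = false := by
  simp [gOp]

private lemma block_tx (Prog : Set TMTrace) (T S : TMTrace) (i j : ℕ) (hj : ¬ j = i)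
    (e : TMEvent)
    (he : e ∈ (if j = i then S.filter (fun e => e.tx == j)
        else if Committed T j then S.filter (fun e => e.tx == j)
        else if Aborted T j ∧ RTPre T j i then ([] : TMTrace)
        else if ∃ L, ViewChain T L j i then DecidedPart (Decided Prog T) S j
        else [])) : e.tx = j := by
  rw [if_neg hj] at he
  split_ifs at he with h1 h2 h3
  · exact beq_iff_eq.mp (List.mem_filter.mp he).2
  · exact absurd he List.not_mem_nil
  · unfold DecidedPart at he
    rcases List.mem_append.mp he with h | h
    · exact (of_decide_eq_true (List.mem_filter.mp h).2).1
    · simp only [List.mem_cons, List.mem_singleton, List.not_mem_nil, or_false] at h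
      rcases h with rfl | rfl <;> rfl
  · exact absurd he List.not_mem_nil


theorem local_read_lastuse_consistency
    (Prog : Set TMTrace) (dom : ℕ → Set ℕ) (T S : TMTrace)
    (hharm : Harmonious Prog dom T) (hgen : SeqGen T S)
    (i : ℕ) (hin : InTrace T i)
    (x v pi qi : ℕ) (hread : ReadExec T i x v pi qi) (hloc : LocalRead T i x pi) :
    ∀ c d, ReadExec (LUVis Prog T S i) i x v c d →
      ∃ a b, WriteExec (LUVis Prog T S i) i x v a b ∧ b < c ∧
        ∀ k u e f, WriteExec (LUVis Prog T S i) k x u e f → ¬ (b < f ∧ f < d) := by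
  -- unpack harmony
  obtain ⟨hmin, hcons, _hobb, _hcoh, _hca, _haa, _hcoda, _hiso, _hdec, _hcc, huw⟩ := hharm
  obtain ⟨hcv, hcr, hcau, hcw, hclr, hcnr⟩ := hcons
  obtain ⟨huw1, huw2⟩ := huw
  -- the consonant write behind the given local read
  obtain ⟨pw, qw, hw, hqwpi, hcwv, -⟩ := hclr i x v pi qi hread hloc
  have hv0 : v ≠ 0 := hcwv.1
  -- uniqueness of the write of value `v` on `x`
  have huniq : ∀ j p q, WriteExec T j x v p q → p = pw ∧ q = qw := by
    intro j p q hjw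
    by_contra hne
    have hne' : p ≠ pw ∨ q ≠ qw := by tauto
    exact huw2 j i x v v p q pw qw hjw hw hne' rfl
  -- any consonant view of value `v` on `x` lies after `pw`
  have key : ∀ pv m, ConsonantView T pv m x v → pw < pv := by
    intro pv
    induction pv using Nat.strong_induction_on with
    | _ pv IH =>
      intro m hview
      obtain ⟨hev, hdisj⟩ := hview
      rcases hdisj with ⟨hv0', -⟩ | ⟨-, j, pu, hjm, hru, ⟨hpupv, -⟩, -⟩ |
        ⟨j, pa, hjm, hau, hpapv⟩
      · exact absurd hv0' hv0
      · obtain ⟨-, p, q, hjw, hpref3, -⟩ := hcr pu j x v hru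
        have hppu : p < pu := hpref3.1
        have := (huniq j p q hjw).1
        omega
      · obtain ⟨-, ⟨pv', hview', -, -⟩, -, -, hend⟩ := hcau pa j x v hau
        have hev' : EvAt T pv' (TMEvent.view j x v) := hview'.1
        have hlt : pv' < pa := by
          rcases lt_trichotomy pv' pa with h | h | h
          · exact h
          · exfalso; subst h; exact absurd (evAt_unique hev' hau) (by simp)
          · exact absurd (Or.inr rfl) (hend pv' _ h hev' rfl)
        have hpalt : pa < pv := hpapv.1
        have := IH pv' (by omega) j hview'
        omega
  -- every read of `T_i` on `x` returning `v` in `T` is a consonant local read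
  have hTlocal : ∀ P Q, ReadExec T i x v P Q → ConsonantLocalRead dom T i x v P Q := by
    intro P Q hPQ
    by_cases hL : LocalRead T i x P
    · exact hclr i x v P Q hPQ hL
    · exfalso
      obtain ⟨pv, hevv, hpref, hview, hnlv⟩ := hcnr i x v P Q hPQ hL
      have hpwpv : pw < pv := key pv i hview
      have hpvQ : pv < Q := hpref.1
      obtain ⟨hri, hrr, hPQlt, hrbet⟩ := hPQ
      obtain ⟨hwi, hwr, hpwqw, hwbet⟩ := hw
      have hnlv' : ¬ qw < pv := hnlv v pw qw ⟨hwi, hwr, hpwqw, hwbet⟩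
      have hPqw : P ≤ qw := by
        by_contra h
        exact hL ⟨v, pw, qw, ⟨hwi, hwr, hpwqw, hwbet⟩, by omega⟩
      have hqwP : qw ≠ P := fun h => by
        rw [h] at hwr; exact absurd (evAt_unique hwr hri) (by simp)
      have hqwQ : qw ≠ Q := fun h => by
        rw [h] at hwr; exact absurd (evAt_unique hwr hrr) (by simp)
      rcases lt_trichotomy pw P with h | h | h
      · have hQqw : Q < qw := by
          rcases lt_trichotomy qw Q with h2 | h2 | h2
          · exact absurd rfl (hrbet qw _ (by omega) h2 hwr rfl)
          · exact absurd h2 hqwQ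
          · exact h2
        exact hwbet P _ h (by omega) hri rfl rfl
      · rw [h] at hwi; exact absurd (evAt_unique hwi hri) (by simp)
      · exact hrbet pw _ h (by omega) hwi rfl rfl
  -- completion data
  obtain ⟨⟨C, ⟨hCpre, -, hCtail⟩, hequiv⟩, -, -⟩ := hgen
  obtain ⟨D, hCD⟩ := hCpre
  have hHistFi : (Hist T).filter (fun e => e.tx == i) = T.filter (gOp i) := by
    unfold Hist
    exact List.filter_filter
  have hBiFi : S.filter (fun e => e.tx == i)
      = T.filter (gOp i) ++ D.filter (fun e => e.tx == i) := by
    rw [hequiv i, ← hCD, List.filter_append, hHistFi]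
  have hD : ∀ e ∈ D, ∃ i', e = TMEvent.invAbort i' ∨ e = TMEvent.resAbort i' := by
    intro e he
    obtain ⟨k, hk⟩ := List.getElem?_of_mem he
    have hC : C[(Hist T).length + k]? = some e := by
      rw [← hCD, List.getElem?_append_right (Nat.le_add_right _ _)]
      have hik : (Hist T).length + k - (Hist T).length = k := by omega
      rw [hik]; exact hk
    exact hCtail _ e (Nat.le_add_right _ _) hC
  have hBiOps : ∀ e ∈ S.filter (fun e => e.tx == i), e.tx = i ∧ e.isMem = false := by
    intro e he
    refine ⟨beq_iff_eq.mp (List.mem_filter.mp he).2, ?_⟩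
    have heC : e ∈ C := by
      have := (List.mem_filter.mp (by rw [← hequiv i]; exact he : e ∈ C.filter (fun e => e.tx == i))).1
      exact this
    rw [← hCD] at heC
    rcases List.mem_append.mp heC with h | h
    · have := (List.mem_filter.mp h).2
      simpa using this
    · obtain ⟨i', h'⟩ := hD e h
      rcases h' with rfl | rfl <;> rfl
  -- intro the read in LUVis
  intro c d hrdLU
  obtain ⟨hc, hd, hcdlt, hcdbet⟩ := hrdLU
  -- `i` occurs in `txList S`
  have hiTx : i ∈ txList S := by
    have hmem : TMEvent.invRead i x ∈ LUVis Prog T S i := List.mem_of_getElem? hc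
    unfold LUVis at hmem
    simp only [List.mem_flatMap] at hmem
    obtain ⟨j, hjmem, hjblk⟩ := hmem
    by_cases hj : j = i
    · rw [← hj]; exact hjmem
    · have := block_tx Prog T S i j hj _ hjblk
      exact absurd this.symm hj
  obtain ⟨L1, L2', hsplit⟩ := List.append_of_mem hiTx
  have hnd : (txList S).Nodup := List.nodup_dedup _
  rw [hsplit] at hnd
  have hiL1 : i ∉ L1 := fun h => (List.nodup_append'.mp hnd).2.2 h List.mem_cons_self
  have hiL2 : i ∉ L2' := (List.nodup_cons.mp (List.nodup_append.mp hnd).2.1).1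
  -- decompose LUVis around the `i` block
  obtain ⟨A, B, hLU, hA, hB⟩ : ∃ A B : TMTrace,
      LUVis Prog T S i = A ++ (S.filter (fun e => e.tx == i) ++ B) ∧
      (∀ e ∈ A, e.tx ≠ i) ∧ (∀ e ∈ B, e.tx ≠ i) := by
    refine ⟨L1.flatMap (fun j => if j = i then S.filter (fun e => e.tx == j)
        else if Committed T j then S.filter (fun e => e.tx == j)
        else if Aborted T j ∧ RTPre T j i then []
        else if ∃ L, ViewChain T L j i then DecidedPart (Decided Prog T) S j
        else []),
      L2'.flatMap (fun j => if j = i then S.filter (fun e => e.tx == j)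
        else if Committed T j then S.filter (fun e => e.tx == j)
        else if Aborted T j ∧ RTPre T j i then []
        else if ∃ L, ViewChain T L j i then DecidedPart (Decided Prog T) S j
        else []), ?_, ?_, ?_⟩
    · unfold LUVis
      rw [hsplit, List.flatMap_append, List.flatMap_cons]
      congr 2
      show (if i = i then S.filter (fun e => e.tx == i)
        else if Committed T i then S.filter (fun e => e.tx == i)
        else if Aborted T i ∧ RTPre T i i then []
        else if ∃ L, ViewChain T L i i then DecidedPart (Decided Prog T) S i
        else []) = S.filter (fun e => e.tx == i)
      rw [if_pos rfl]
    · intro e he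
      obtain ⟨j, hjL, hjf⟩ := List.mem_flatMap.mp he
      have hji : ¬ j = i := fun h => hiL1 (h ▸ hjL)
      rw [block_tx Prog T S i j hji e hjf]
      exact hji
    · intro e he
      obtain ⟨j, hjL, hjf⟩ := List.mem_flatMap.mp he
      have hji : ¬ j = i := fun h => hiL2 (h ▸ hjL)
      rw [block_tx Prog T S i j hji e hjf]
      exact hji
  -- region lemmas
  have hreg1 : ∀ r e, EvAt (LUVis Prog T S i) r e → e.tx = i →
      A.length ≤ r ∧ r - A.length < (S.filter (fun e => e.tx == i)).length ∧
        (S.filter (fun e => e.tx == i))[r - A.length]? = some e := by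
    intro r e hr htx
    have hr' : (A ++ (S.filter (fun e => e.tx == i) ++ B))[r]? = some e := by
      rw [← hLU]; exact hr
    rcases lt_or_ge r A.length with h | h
    · rw [List.getElem?_append_left h] at hr'
      exact absurd htx (hA e (List.mem_of_getElem? hr'))
    · rw [List.getElem?_append_right h] at hr'
      rcases lt_or_ge (r - A.length) (S.filter (fun e => e.tx == i)).length with h2 | h2
      · rw [List.getElem?_append_left h2] at hr'
        exact ⟨h, h2, hr'⟩
      · rw [List.getElem?_append_right h2] at hr'
        exact absurd htx (hB e (List.mem_of_getElem? hr'))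
  have hreg2 : ∀ (k : ℕ) (e : TMEvent), (S.filter (fun e => e.tx == i))[k]? = some e →
      EvAt (LUVis Prog T S i) (A.length + k) e := by
    intro k e hk
    have hk2 := hk
    rw [List.getElem?_eq_some_iff] at hk2
    show (LUVis Prog T S i)[A.length + k]? = some e
    rw [hLU, List.getElem?_append_right (Nat.le_add_right _ _), Nat.add_sub_cancel_left,
      List.getElem?_append_left hk2.1]
    exact hk
  -- matching pairs of `T_i` in the region are adjacent
  have hadj : ∀ cc dd,
      (∀ r e, cc < r → r < dd → EvAt (LUVis Prog T S i) r e → e.tx = i → ¬ e.isOp) →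
      cc < dd → A.length ≤ cc →
      dd - A.length < (S.filter (fun e => e.tx == i)).length → dd = cc + 1 := by
    intro cc dd hbet hlt h1 h2
    by_contra hne
    have hmid : cc + 1 < dd := by omega
    have hmidlen : cc + 1 - A.length < (S.filter (fun e => e.tx == i)).length := by omega
    obtain ⟨e, he⟩ : ∃ e, (S.filter (fun e => e.tx == i))[cc + 1 - A.length]? = some e :=
      ⟨_, List.getElem?_eq_getElem hmidlen⟩
    have hev : EvAt (LUVis Prog T S i) (cc + 1) e := by
      have := hreg2 _ _ he
      rwa [show A.length + (cc + 1 - A.length) = cc + 1 by omega] at this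
    have hBe := hBiOps e (List.mem_of_getElem? he)
    exact hbet (cc + 1) e (by omega) hmid hev hBe.1 hBe.2
  obtain ⟨hoffc, hclen, hcB⟩ := hreg1 c _ hc rfl
  obtain ⟨hoffd, hdlen, hdB⟩ := hreg1 d _ hd rfl
  have hdc : d = c + 1 := hadj c d hcdbet hcdlt hoffc hdlen
  -- from the `i`-block back to `T.filter (gOp i)`
  have hFiOf : ∀ (k : ℕ) (e : TMEvent), (S.filter (fun e => e.tx == i))[k]? = some e →
      (∀ i', e ≠ TMEvent.invAbort i') → (∀ i', e ≠ TMEvent.resAbort i') →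
      (T.filter (gOp i))[k]? = some e := by
    intro k e hk h1 h2
    rw [hBiFi] at hk
    rcases lt_or_ge k (T.filter (gOp i)).length with h | h
    · rwa [List.getElem?_append_left h] at hk
    · rw [List.getElem?_append_right h] at hk
      obtain ⟨i', hi'⟩ := hD e (List.mem_of_mem_filter (List.mem_of_getElem? hk))
      rcases hi' with h' | h'
      · exact absurd h' (h1 i')
      · exact absurd h' (h2 i')
  have hFiBi : ∀ (k : ℕ) (e : TMEvent), (T.filter (gOp i))[k]? = some e →
      (S.filter (fun e => e.tx == i))[k]? = some e := by
    intro k e hk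
    have hk2 := hk
    rw [List.getElem?_eq_some_iff] at hk2
    rw [hBiFi, List.getElem?_append_left hk2.1]
    exact hk
  have hcF : (T.filter (gOp i))[c - A.length]? = some (TMEvent.invRead i x) :=
    hFiOf _ _ hcB (fun _ h => TMEvent.noConfusion h) (fun _ h => TMEvent.noConfusion h)
  have hdF : (T.filter (gOp i))[c - A.length + 1]? = some (TMEvent.resRead i x v) := by
    rw [show c - A.length + 1 = d - A.length by omega]
    exact hFiOf _ _ hdB (fun _ h => TMEvent.noConfusion h) (fun _ h => TMEvent.noConfusion h)
  -- corresponding read execution in T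
  have hP : EvAt T (rIdx (gOp i) T (c - A.length)) (TMEvent.invRead i x) :=
    rIdx_get _ _ _ _ hcF
  have hQ : EvAt T (rIdx (gOp i) T (c - A.length + 1)) (TMEvent.resRead i x v) :=
    rIdx_get _ _ _ _ hdF
  have hPQ : rIdx (gOp i) T (c - A.length) < rIdx (gOp i) T (c - A.length + 1) :=
    rIdx_mono _ _ _ _ _ (Nat.lt_succ_self _) hdF
  have hMT : Matching T i (rIdx (gOp i) T (c - A.length)) (rIdx (gOp i) T (c - A.length + 1)) := by
    refine ⟨hPQ, fun r e h1 h2 he htx hop => ?_⟩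
    have hfalse := rIdx_gap (gOp i) T (c - A.length) r _ _ e hcF hdF h1 h2 he
    have hop' : e.isMem = false := hop
    rw [gOp] at hfalse
    simp [htx, hop'] at hfalse
  obtain ⟨pw2, qw2, hw2, hlt2, -, hmax2⟩ := hTlocal _ _ ⟨hP, hQ, hMT⟩
  obtain ⟨hw2i, hw2r, hw2lt, hw2bet⟩ := hw2
  -- map the write into the filtered list
  have hgw1 : gOp i (TMEvent.invWrite i x v) = true := by simp [gOp, TMEvent.tx, TMEvent.isMem]
  have hgw2 : gOp i (TMEvent.resWrite i x v) = true := by simp [gOp, TMEvent.tx, TMEvent.isMem]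
  obtain ⟨a', ha'F, ha'ρ⟩ := rIdx_surj (gOp i) T pw2 _ hw2i hgw1
  obtain ⟨b', hb'F, hb'ρ⟩ := rIdx_surj (gOp i) T qw2 _ hw2r hgw2
  have hab : a' < b' := by
    by_contra h
    have := rIdx_le_mono (gOp i) T b' a' _ (by omega) ha'F
    omega
  have hb'a' : b' = a' + 1 := by
    by_contra h
    have hlt' : a' + 1 < b' := by omega
    have hb'len := hb'F
    rw [List.getElem?_eq_some_iff] at hb'len
    have hlen : a' + 1 < (T.filter (gOp i)).length := by
      have := hb'len.1; omega
    obtain ⟨e, he⟩ : ∃ e, (T.filter (gOp i))[a' + 1]? = some e :=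
      ⟨_, List.getElem?_eq_getElem hlen⟩
    have h1 : rIdx (gOp i) T a' < rIdx (gOp i) T (a' + 1) :=
      rIdx_mono _ _ _ _ _ (Nat.lt_succ_self _) he
    have h2 : rIdx (gOp i) T (a' + 1) < rIdx (gOp i) T b' :=
      rIdx_mono _ _ _ _ _ hlt' hb'F
    have heT : EvAt T (rIdx (gOp i) T (a' + 1)) e := rIdx_get _ _ _ _ he
    have hge : gOp i e = true := (List.mem_filter.mp (List.mem_of_getElem? he)).2
    obtain ⟨htxe, home⟩ := gOp_true_iff.mp hge
    exact hw2bet _ e (by omega) (by omega) heT htxe home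
  -- the write execution inside LUVis
  have hwa : EvAt (LUVis Prog T S i) (A.length + a') (TMEvent.invWrite i x v) :=
    hreg2 _ _ (hFiBi _ _ ha'F)
  have hwb : EvAt (LUVis Prog T S i) (A.length + b') (TMEvent.resWrite i x v) :=
    hreg2 _ _ (hFiBi _ _ hb'F)
  have hbc : b' < c - A.length := by
    by_contra h
    have := rIdx_le_mono (gOp i) T (c - A.length) b' _ (by omega) hb'F
    omega
  refine ⟨A.length + a', A.length + b',
    ⟨hwa, hwb, by omega, fun r e h1 h2 _ _ _ => by omega⟩, by omega, ?_⟩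
  -- no other write execution on `x` in between
  rintro k u ee ff ⟨hke, hkf, hklt, hkbet⟩ ⟨hbf, hfd⟩
  have hofff : A.length ≤ ff := by omega
  have hfflen : ff - A.length < (S.filter (fun e => e.tx == i)).length := by omega
  have hffB : (S.filter (fun e => e.tx == i))[ff - A.length]? = some (TMEvent.resWrite k x u) := by
    have hr' : (A ++ (S.filter (fun e => e.tx == i) ++ B))[ff]? = some (TMEvent.resWrite k x u) := by
      rw [← hLU]; exact hkf
    rwa [List.getElem?_append_right hofff, List.getElem?_append_left hfflen] at hr'
  have hki : i = k := by
    have := (hBiOps _ (List.mem_of_getElem? hffB)).1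
    simpa [TMEvent.tx] using this.symm
  subst hki
  obtain ⟨hoffe, helen, heB⟩ := hreg1 ee _ hke rfl
  have hfe : ff = ee + 1 := hadj ee ff hkbet hklt hoffe hfflen
  have heF : (T.filter (gOp i))[ee - A.length]? = some (TMEvent.invWrite i x u) :=
    hFiOf _ _ heB (fun _ h => TMEvent.noConfusion h) (fun _ h => TMEvent.noConfusion h)
  have hfF : (T.filter (gOp i))[ee - A.length + 1]? = some (TMEvent.resWrite i x u) := by
    rw [show ee - A.length + 1 = ff - A.length by omega]
    exact hFiOf _ _ hffB (fun _ h => TMEvent.noConfusion h) (fun _ h => TMEvent.noConfusion h)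
  have hpe : EvAt T (rIdx (gOp i) T (ee - A.length)) (TMEvent.invWrite i x u) :=
    rIdx_get _ _ _ _ heF
  have hqf : EvAt T (rIdx (gOp i) T (ee - A.length + 1)) (TMEvent.resWrite i x u) :=
    rIdx_get _ _ _ _ hfF
  have hpq : rIdx (gOp i) T (ee - A.length) < rIdx (gOp i) T (ee - A.length + 1) :=
    rIdx_mono _ _ _ _ _ (Nat.lt_succ_self _) hfF
  have hMW : Matching T i (rIdx (gOp i) T (ee - A.length)) (rIdx (gOp i) T (ee - A.length + 1)) := by
    refine ⟨hpq, fun r e h1 h2 he htx hop => ?_⟩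
    have hfalse := rIdx_gap (gOp i) T (ee - A.length) r _ _ e heF hfF h1 h2 he
    have hop' : e.isMem = false := hop
    rw [gOp] at hfalse
    simp [htx, hop'] at hfalse
  -- the interfering write sits strictly between ok and the read invocation: contradiction
  have hffc : ff < c := by
    rcases lt_trichotomy ff c with h | h | h
    · exact h
    · exfalso; rw [h] at hkf; exact TMEvent.noConfusion (evAt_unique hkf hc)
    · omega
  have hidx2 : ee - A.length + 1 < c - A.length := by
    rcases Nat.lt_or_ge (ee - A.length + 1) (c - A.length) with h | h
    · exact h
    · exfalso
      have hEq : ee - A.length + 1 = c - A.length := by omega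
      rw [hEq] at hfF
      rw [hfF] at hcF
      exact TMEvent.noConfusion (Option.some.inj hcF)
  have hq1 : qw2 < rIdx (gOp i) T (ee - A.length + 1) := by
    have hb'lt : b' < ee - A.length + 1 := by omega
    have := rIdx_mono (gOp i) T b' (ee - A.length + 1) _ hb'lt hfF
    omega
  have hq2 : rIdx (gOp i) T (ee - A.length + 1) < rIdx (gOp i) T (c - A.length) :=
    rIdx_mono (gOp i) T _ _ _ hidx2 hcF
  exact hmax2 u _ _ ⟨hpe, hqf, hMW⟩ ⟨hq1, hq2⟩


end TM
end
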